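/- Let α, β > 0 and let X have the Gamma(α, β) distribution. Then there is a finite constant c (depending on α, β) such that for all 0 ≤ a < b ≤ ∞, E|X∧b∨a − E[X∧b∨a]| ≤ c · E[(1 + X)·1_{a < X < b}], where X∧b∨a = min(max(X,a),b). -/

import Mathlib

/-!
The truncation `g = x ∧ b ∨ a` grows only on `S = (a, b)`, and there at unit speed:
`|g x - g y| ≤ |S ∩ (x, y)|`. Replacing the mean by a median `m` costs a factor `2`, and by
Tonelli `E|g X - g m| ≤ ∫_S P(t lies strictly between X and m) dt ≤ 2 ∫_S F(t) (1 - F(t)) dt`,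
because `1 - F(t) ≥ 1/2` below a median and `F(t) ≥ 1/2` above it. For the Gamma law with
density `f`, `F(t) (1 - F(t)) ≤ C (1 + t) f(t)`: while `β t < 2 (α - 1)` the head satisfies
`F(t) ≤ β^α t^α / (α Γ(α)) ≤ e^{2(α - 1)} t f(t) / α`, and once `β t ≥ 2 (α - 1)` the density
decays like `e^{-β s / 2}` beyond `t`, so the tail is at most `2 f(t) / β`. Integrating over `S`
gives `C · E[(1 + X) 1_S(X)]`.
-/

open MeasureTheory ProbabilityTheory

/-- Truncation `x ∧ b ∨ a` of a real number `x` to the (extended-real) interval `[a, b]`. -/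
noncomputable def truncE (x : ℝ) (a b : EReal) : ℝ :=
  (min (max (x : EReal) a) b).toReal

open Set Real
open scoped ENNReal

lemma measurable_truncE (a b : EReal) : Measurable fun x => truncE x a b := by
  unfold truncE; fun_prop

lemma ofReal_abs_truncE_sub_le (a b : EReal) (x y : ℝ) :
    ENNReal.ofReal |truncE x a b - truncE y a b|
      ≤ volume ({t : ℝ | a < t ∧ (t : EReal) < b} ∩ uIoo x y) := by
  wlog hxy : x ≤ y generalizing x y
  · rw [abs_sub_comm, uIoo_comm]
    exact this y x (le_of_not_ge hxy)
  rw [uIoo_of_le hxy]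
  induction a using EReal.rec <;> induction b using EReal.rec <;>
    simp [truncE, ← EReal.coe_strictMono.monotone.map_max, ← EReal.coe_strictMono.monotone.map_min]
  case bot.coe B =>
    rw [Iio_def, Iio_inter_Ioo, volume_Ioo, ENNReal.ofReal_le_ofReal_iff']
    grind
  case bot.top =>
    rw [abs_sub_comm, abs_of_nonneg (sub_nonneg.2 hxy)]
  case coe.coe A B =>
    rw [Ioo_def, Ioo_inter_Ioo, volume_Ioo, ENNReal.ofReal_le_ofReal_iff']
    grind
  case coe.top A =>
    rw [Ioi_def, Ioi_inter_Ioo, volume_Ioo, ENNReal.ofReal_le_ofReal_iff']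
    grind

lemma integral_abs_sub_integral_le {Ω : Type*} [MeasurableSpace Ω] {μ : Measure Ω}
    [IsProbabilityMeasure μ] {f : Ω → ℝ} (hf : Integrable f μ) (c : ℝ) :
    ∫ ω, |f ω - ∫ ω', f ω' ∂μ| ∂μ ≤ 2 * ∫ ω, |f ω - c| ∂μ := by
  have hfc : Integrable (fun ω => f ω - c) μ := hf.sub (integrable_const c)
  have hmean : |c - ∫ ω', f ω' ∂μ| ≤ ∫ ω, |f ω - c| ∂μ := by
    simpa [abs_sub_comm, integral_sub hf (integrable_const c)] using
      abs_integral_le_integral_abs (f := fun ω => f ω - c) (μ := μ)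
  calc ∫ ω, |f ω - ∫ ω', f ω' ∂μ| ∂μ
      ≤ ∫ ω, (|f ω - c| + |c - ∫ ω', f ω' ∂μ|) ∂μ :=
        integral_mono (hf.sub (integrable_const _)).abs (hfc.abs.add (integrable_const _))
          fun ω => abs_sub_le _ c _
    _ ≤ 2 * ∫ ω, |f ω - c| ∂μ := by
        rw [integral_add hfc.abs (integrable_const _), integral_const, probReal_univ, one_smul]
        linarith

/-- Equivalent to `2⁻¹ ≤ ν (Iic m)` and `2⁻¹ ≤ ν (Ici m)`, by continuity of measures. -/
def IsMedian (ν : Measure ℝ) (m : ℝ) : Prop :=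
  (∀ t < m, 2⁻¹ ≤ ν (Ioi t)) ∧ ∀ t > m, 2⁻¹ ≤ ν (Iic t)

lemma exists_isMedian (ν : Measure ℝ) [IsProbabilityMeasure ν] : ∃ m, IsMedian ν m := by
  set Q := {t : ℝ | cdf ν t ≤ 1 / 2}
  have hQ : Q.Nonempty :=
    ((tendsto_cdf_atBot ν).eventually (Iic_mem_nhds (by norm_num : (0 : ℝ) < 1 / 2))).exists
  obtain ⟨u, hu⟩ :=
    ((tendsto_cdf_atTop ν).eventually (Ioi_mem_nhds (by norm_num : (1 / 2 : ℝ) < 1))).exists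
  have hQbdd : BddAbove Q := ⟨u, fun s hs => le_of_not_gt fun hus =>
    (lt_irrefl (1 / 2 : ℝ)) ((hu.trans_le (monotone_cdf ν hus.le)).trans_le hs)⟩
  have half : ENNReal.ofReal (1 / 2) = 2⁻¹ := by
    rw [one_div, ENNReal.ofReal_inv_of_pos two_pos, ENNReal.ofReal_ofNat]
  refine ⟨sSup Q, fun t ht => ?_, fun t ht => ?_⟩
  · obtain ⟨s, hs, hts⟩ := exists_lt_of_lt_csSup hQ ht
    have hs' : ν (Iic s) ≤ 2⁻¹ := by
      rw [← ofReal_cdf, ← half]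
      exact ENNReal.ofReal_le_ofReal hs
    calc 2⁻¹ = 1 - 2⁻¹ := ENNReal.one_sub_inv_two.symm
      _ ≤ 1 - ν (Iic s) := tsub_le_tsub_left hs' 1
      _ = ν (Ioi s) := by rw [← compl_Iic, prob_compl_eq_one_sub measurableSet_Iic]
      _ ≤ ν (Ioi t) := measure_mono (Ioi_subset_Ioi hts.le)
  · have ht' : 1 / 2 < cdf ν t := lt_of_not_ge fun h => (le_csSup hQbdd h).not_gt ht
    rw [← ofReal_cdf, ← half]
    exact ENNReal.ofReal_le_ofReal ht'.le

namespace IsMedian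

variable {ν : Measure ℝ} {m : ℝ}

lemma measure_mem_uIoo_le (hm : IsMedian ν m) (t : ℝ) :
    ν {x | t ∈ uIoo x m} ≤ 2 * (ν (Iic t) * ν (Ioi t)) := by
  rcases lt_trichotomy t m with htm | rfl | htm
  · calc ν {x | t ∈ uIoo x m} ≤ ν (Iic t) := measure_mono fun x hx => by
          simp only [uIoo, mem_ofPred_eq, mem_Ioo, inf_lt_iff, lt_sup_iff] at hx
          grind
      _ = ν (Iic t) * (2 * 2⁻¹) := by
          rw [ENNReal.mul_inv_cancel two_ne_zero ENNReal.ofNat_ne_top, mul_one]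
      _ ≤ 2 * (ν (Iic t) * ν (Ioi t)) := by
          rw [mul_left_comm]; gcongr; exact hm.1 t htm
  · simp
  · calc ν {x | t ∈ uIoo x m} ≤ ν (Ioi t) := measure_mono fun x hx => by
          simp only [uIoo, mem_ofPred_eq, mem_Ioo, inf_lt_iff, lt_sup_iff] at hx
          grind
      _ = (2 * 2⁻¹) * ν (Ioi t) := by
          rw [ENNReal.mul_inv_cancel two_ne_zero ENNReal.ofNat_ne_top, one_mul]
      _ ≤ 2 * (ν (Iic t) * ν (Ioi t)) := by
          rw [mul_assoc]; gcongr; exact hm.2 t htm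

lemma lintegral_volume_inter_uIoo_le [SFinite ν] (hm : IsMedian ν m) {S : Set ℝ}
    (hS : MeasurableSet S) :
    ∫⁻ x, volume (S ∩ uIoo x m) ∂ν ≤ 2 * ∫⁻ t in S, ν (Iic t) * ν (Ioi t) := by
  set V : Set (ℝ × ℝ) := {p | p.2 ∈ S ∧ p.2 ∈ uIoo p.1 m}
  have hV : MeasurableSet V := (measurable_snd hS).inter <|
    (measurableSet_lt (measurable_fst.min measurable_const) measurable_snd).inter
      (measurableSet_lt measurable_snd (measurable_fst.max measurable_const))
  calc ∫⁻ x, volume (S ∩ uIoo x m) ∂ν = (ν.prod volume) V := (Measure.prod_apply hV).symm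
    _ = ∫⁻ t, S.indicator (fun t => ν {x | t ∈ uIoo x m}) t :=
        (Measure.prod_apply_symm hV).trans (lintegral_congr fun t => by
          by_cases ht : t ∈ S <;> simp [V, ht])
    _ ≤ ∫⁻ t in S, 2 * (ν (Iic t) * ν (Ioi t)) := by
        rw [lintegral_indicator hS]
        exact setLIntegral_mono' hS fun t _ => hm.measure_mem_uIoo_le t
    _ = 2 * ∫⁻ t in S, ν (Iic t) * ν (Ioi t) := lintegral_const_mul' _ _ ENNReal.ofNat_ne_top

end IsMedian

lemma lipschitzWith_one_of_ofReal_abs_sub_le_volume {S : Set ℝ} {g : ℝ → ℝ}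
    (hg : ∀ x y, ENNReal.ofReal |g x - g y| ≤ volume (S ∩ uIoo x y)) : LipschitzWith 1 g :=
  LipschitzWith.of_dist_le_mul fun x y => by
    have h := (hg x y).trans (measure_mono inter_subset_right)
    rw [Real.volume_uIoo, ENNReal.ofReal_le_ofReal_iff (abs_nonneg _)] at h
    simpa [Real.dist_eq, abs_sub_comm y x] using h

theorem ofReal_integral_abs_sub_integral_le {ν : Measure ℝ} [IsProbabilityMeasure ν]
    (hν : Integrable id ν) {S : Set ℝ} (hS : MeasurableSet S) {g : ℝ → ℝ}
    (hg : ∀ x y, ENNReal.ofReal |g x - g y| ≤ volume (S ∩ uIoo x y)) :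
    ENNReal.ofReal (∫ x, |g x - ∫ y, g y ∂ν| ∂ν) ≤ 4 * ∫⁻ t in S, ν (Iic t) * ν (Ioi t) := by
  have hlip := lipschitzWith_one_of_ofReal_abs_sub_le_volume hg
  have hgi : Integrable g ν :=
    ((integrable_const |g 0|).add hν.abs).mono' hlip.continuous.aestronglyMeasurable <|
      ae_of_all _ fun x => by
        simpa [Real.dist_eq, add_comm] using
          (abs_sub_abs_le_abs_sub _ _).trans (hlip.dist_le_mul x 0)
  obtain ⟨m, hm⟩ := exists_isMedian ν
  have hgm : Integrable (fun x => |g x - g m|) ν := (hgi.sub (integrable_const _)).abs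
  calc ENNReal.ofReal (∫ x, |g x - ∫ y, g y ∂ν| ∂ν)
      ≤ ENNReal.ofReal (2 * ∫ x, |g x - g m| ∂ν) :=
        ENNReal.ofReal_le_ofReal (integral_abs_sub_integral_le hgi (g m))
    _ = 2 * ∫⁻ x, ENNReal.ofReal |g x - g m| ∂ν := by
        rw [ENNReal.ofReal_mul zero_le_two, ENNReal.ofReal_ofNat,
          ofReal_integral_eq_lintegral_ofReal hgm (ae_of_all _ fun _ => abs_nonneg _)]
    _ ≤ 2 * ∫⁻ x, volume (S ∩ uIoo x m) ∂ν := by gcongr with x; exact hg x m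
    _ ≤ 2 * (2 * ∫⁻ t in S, ν (Iic t) * ν (Ioi t)) := by
        gcongr; exact hm.lintegral_volume_inter_uIoo_le hS
    _ = 4 * ∫⁻ t in S, ν (Iic t) * ν (Ioi t) := by rw [← mul_assoc]; norm_num

lemma gammaPDFReal_of_nonneg {α β t : ℝ} (ht : 0 ≤ t) :
    gammaPDFReal α β t = β ^ α / Gamma α * t ^ (α - 1) * exp (-(β * t)) := if_pos ht

lemma rpow_sub_one_le_mul_exp {α β s t : ℝ} (hβ : 0 ≤ β) (ht : 0 < t) (hts : t ≤ s)
    (hαt : 2 * (α - 1) ≤ β * t) :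
    s ^ (α - 1) ≤ t ^ (α - 1) * exp (β / 2 * (s - t)) := by
  have hs : 0 < s := ht.trans_le hts
  have hlog : 0 ≤ log (s / t) := log_nonneg ((one_le_div ht).2 hts)
  have hlog' : log (s / t) * t ≤ s - t := by
    have := log_le_sub_one_of_pos (div_pos hs ht)
    rw [div_sub_one ht.ne', le_div_iff₀ ht] at this
    exact this
  have hexp : log (s / t) * (α - 1) ≤ β / 2 * (s - t) := by
    rcases le_total α 1 with hα | hα <;> nlinarith
  calc s ^ (α - 1) = t ^ (α - 1) * (s / t) ^ (α - 1) := by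
        rw [div_rpow hs.le ht.le, mul_div_cancel₀ _ (rpow_pos_of_pos ht _).ne']
    _ ≤ t ^ (α - 1) * exp (β / 2 * (s - t)) := by
        rw [rpow_def_of_pos (div_pos hs ht)]
        gcongr

lemma gammaMeasure_Iic_le {α β t : ℝ} (hα : 0 < α) (hβ : 0 ≤ β) (ht : 0 ≤ t) :
    gammaMeasure α β (Iic t) ≤ ENNReal.ofReal (β ^ α / Gamma α * (t ^ α / α)) := by
  have hint : IntegrableOn (fun s => β ^ α / Gamma α * s ^ (α - 1)) (Ioc 0 t) :=
    ((intervalIntegral.intervalIntegrable_rpow' (by linarith)).const_mul _).1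
  rw [gammaMeasure, withDensity_apply _ measurableSet_Iic,
    lintegral_Iic_eq_lintegral_Iio_add_Icc _ ht, lintegral_gammaPDF_of_nonpos le_rfl, zero_add,
    ← setLIntegral_congr Ioc_ae_eq_Icc]
  calc ∫⁻ s in Ioc 0 t, gammaPDF α β s
      ≤ ∫⁻ s in Ioc 0 t, ENNReal.ofReal (β ^ α / Gamma α * s ^ (α - 1)) := by
        refine setLIntegral_mono' measurableSet_Ioc fun s hs => ?_
        rw [gammaPDF, gammaPDFReal_of_nonneg hs.1.le]
        refine ENNReal.ofReal_le_ofReal (mul_le_of_le_one_right ?_ (exp_le_one_iff.2 ?_))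
        · have := hs.1.le; positivity
        · have := hs.1.le; nlinarith
    _ = ENNReal.ofReal (β ^ α / Gamma α * (t ^ α / α)) := by
        rw [← ofReal_integral_eq_lintegral_ofReal hint
          ((ae_restrict_iff' measurableSet_Ioc).2 (ae_of_all _ fun s hs => by
            have := hs.1.le; positivity)),
          integral_const_mul, ← intervalIntegral.integral_of_le ht,
          integral_rpow (Or.inl (by linarith)), sub_add_cancel, zero_rpow hα.ne', sub_zero]

lemma gammaMeasure_Ioi_le {α β t : ℝ} (hα : 0 < α) (hβ : 0 < β) (ht : 0 < t)
    (hαt : 2 * (α - 1) ≤ β * t) :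
    gammaMeasure α β (Ioi t) ≤ ENNReal.ofReal (2 / β * gammaPDFReal α β t) := by
  set K := gammaPDFReal α β t * exp (β / 2 * t) with hKdef
  have hK : 0 ≤ K := mul_nonneg (gammaPDFReal_nonneg hα hβ t) (exp_pos _).le
  have hint : IntegrableOn (fun s => K * exp (-(β / 2) * s)) (Ioi t) :=
    (integrableOn_exp_mul_Ioi (by linarith) t).const_mul K
  rw [gammaMeasure, withDensity_apply _ measurableSet_Ioi]
  calc ∫⁻ s in Ioi t, gammaPDF α β s
      ≤ ∫⁻ s in Ioi t, ENNReal.ofReal (K * exp (-(β / 2) * s)) := by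
        refine setLIntegral_mono' measurableSet_Ioi fun s hs => ENNReal.ofReal_le_ofReal ?_
        have hts : t ≤ s := le_of_lt hs
        rw [gammaPDFReal_of_nonneg (ht.le.trans hts), hKdef, gammaPDFReal_of_nonneg ht.le]
        calc β ^ α / Gamma α * s ^ (α - 1) * exp (-(β * s))
            ≤ β ^ α / Gamma α * (t ^ (α - 1) * exp (β / 2 * (s - t))) * exp (-(β * s)) := by
              gcongr
              exact rpow_sub_one_le_mul_exp hβ.le ht hts hαt
          _ = β ^ α / Gamma α * t ^ (α - 1) * exp (-(β * t)) * exp (β / 2 * t)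
                * exp (-(β / 2) * s) := by
              simp only [mul_assoc, ← exp_add]; ring_nf
    _ = ENNReal.ofReal (2 / β * gammaPDFReal α β t) := by
        rw [← ofReal_integral_eq_lintegral_ofReal hint (ae_of_all _ fun s => by positivity),
          integral_const_mul, integral_exp_mul_Ioi (by linarith)]
        have hexp : exp (β / 2 * t) * exp (-(β / 2) * t) = 1 := by rw [← exp_add]; ring_nf; simp
        rw [hKdef, neg_div_neg_eq, mul_div_assoc', mul_assoc, hexp]
        congr 1
        ring

lemma gammaMeasure_Iic_of_nonpos {α β t : ℝ} (hα : 0 < α) (hβ : 0 ≤ β) (ht : t ≤ 0) :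
    gammaMeasure α β (Iic t) = 0 := by
  refine le_antisymm ((measure_mono (Iic_subset_Iic.2 ht)).trans ?_) zero_le
  simpa [zero_rpow hα.ne'] using gammaMeasure_Iic_le (β := β) hα hβ le_rfl

lemma gammaMeasure_Iic_le_mul_gammaPDFReal {α β t : ℝ} (hα : 0 < α) (hβ : 0 < β) (ht : 0 < t)
    (hαt : β * t ≤ 2 * (α - 1)) :
    gammaMeasure α β (Iic t)
      ≤ ENNReal.ofReal (exp (2 * (α - 1)) / α * (t * gammaPDFReal α β t)) := by
  refine (gammaMeasure_Iic_le hα hβ.le ht.le).trans (ENNReal.ofReal_le_ofReal ?_)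
  have hpow : β ^ α / Gamma α * (t ^ α / α) = exp (β * t) / α * (t * gammaPDFReal α β t) := by
    rw [gammaPDFReal_of_nonneg ht.le, rpow_sub_one ht.ne']
    field_simp
    simp [← exp_add]
  rw [hpow]
  have := gammaPDFReal_nonneg hα hβ t
  gcongr

lemma exists_gammaMeasure_Iic_mul_Ioi_le {α β : ℝ} (hα : 0 < α) (hβ : 0 < β) :
    ∃ C, 0 ≤ C ∧ ∀ t, gammaMeasure α β (Iic t) * gammaMeasure α β (Ioi t)
      ≤ ENNReal.ofReal (C * ((1 + t) * gammaPDFReal α β t)) := by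
  have := isProbabilityMeasure_gammaMeasure hα hβ
  refine ⟨2 / β + exp (2 * (α - 1)) / α, by positivity, fun t => ?_⟩
  rcases le_or_gt t 0 with ht | ht
  · simp [gammaMeasure_Iic_of_nonpos hα hβ.le ht]
  have hf := gammaPDFReal_nonneg hα hβ t
  rcases le_total (2 * (α - 1)) (β * t) with hαt | hαt
  · calc gammaMeasure α β (Iic t) * gammaMeasure α β (Ioi t)
        ≤ gammaMeasure α β (Ioi t) := mul_le_of_le_one_left' prob_le_one
      _ ≤ ENNReal.ofReal (2 / β * gammaPDFReal α β t) := gammaMeasure_Ioi_le hα hβ ht hαt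
      _ ≤ _ := by
          gcongr
          · exact le_add_of_nonneg_right (by positivity)
          · exact le_mul_of_one_le_left hf (by linarith)
  · calc gammaMeasure α β (Iic t) * gammaMeasure α β (Ioi t)
        ≤ gammaMeasure α β (Iic t) := mul_le_of_le_one_right' prob_le_one
      _ ≤ ENNReal.ofReal (exp (2 * (α - 1)) / α * (t * gammaPDFReal α β t)) :=
        gammaMeasure_Iic_le_mul_gammaPDFReal hα hβ ht hαt
      _ ≤ _ := by
          gcongr
          · exact le_add_of_nonneg_left (by positivity)
          · linarith

lemma abs_mul_gammaPDFReal {α β : ℝ} (hα : 0 < α) (hβ : 0 < β) (x : ℝ) :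
    |x| * gammaPDFReal α β x = α / β * gammaPDFReal (α + 1) β x := by
  rcases lt_or_ge x 0 with hx | hx
  · simp [gammaPDFReal, not_le.2 hx]
  have hpow : x ^ α = x ^ (α - 1) * x := by
    rw [← rpow_add_one' hx (by simp [hα.ne']), sub_add_cancel]
  rw [abs_of_nonneg hx, gammaPDFReal_of_nonneg hx, gammaPDFReal_of_nonneg hx, add_sub_cancel_right,
    Gamma_add_one hα.ne', rpow_add_one hβ.ne', hpow]
  have := (Gamma_pos_of_pos hα).ne'
  field_simp

lemma integrable_id_gammaMeasure {α β : ℝ} (hα : 0 < α) (hβ : 0 < β) :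
    Integrable id (gammaMeasure α β) := by
  refine ⟨aestronglyMeasurable_id, ?_⟩
  have hpdf : Measurable (gammaPDF α β) := (measurable_gammaPDFReal α β).ennreal_ofReal
  rw [hasFiniteIntegral_def, gammaMeasure,
    lintegral_withDensity_eq_lintegral_mul _ hpdf measurable_id.enorm]
  calc _ = ∫⁻ x, ENNReal.ofReal (α / β) * gammaPDF (α + 1) β x := lintegral_congr fun x => by
        rw [Pi.mul_apply, id, enorm_eq_ofReal_abs, gammaPDF, ← ENNReal.ofReal_mul
          (gammaPDFReal_nonneg hα hβ x), mul_comm, abs_mul_gammaPDFReal hα hβ,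
          ENNReal.ofReal_mul (by positivity), gammaPDF]
    _ < ⊤ := by
        rw [lintegral_const_mul' _ _ ENNReal.ofReal_ne_top,
          lintegral_gammaPDF_eq_one (by linarith) hβ, mul_one]
        exact ENNReal.ofReal_lt_top

lemma ae_nonneg_gammaMeasure (α β : ℝ) : ∀ᵐ x ∂gammaMeasure α β, 0 ≤ x := by
  rw [ae_iff, show {x : ℝ | ¬0 ≤ x} = Iio 0 by ext; simp, gammaMeasure,
    withDensity_apply _ measurableSet_Iio]
  exact lintegral_gammaPDF_of_nonpos le_rfl

lemma ofReal_setIntegral_one_add_gammaMeasure {α β : ℝ} (hα : 0 < α) (hβ : 0 < β) {S : Set ℝ}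
    (hS : MeasurableSet S) :
    ENNReal.ofReal (∫ x in S, (1 + x) ∂gammaMeasure α β)
      = ∫⁻ t in S, ENNReal.ofReal ((1 + t) * gammaPDFReal α β t) := by
  have := isProbabilityMeasure_gammaMeasure hα hβ
  have hpdf : Measurable (gammaPDF α β) := (measurable_gammaPDFReal α β).ennreal_ofReal
  have hint : Integrable (fun x => 1 + x) (gammaMeasure α β) :=
    (integrable_const 1).add (integrable_id_gammaMeasure hα hβ)
  rw [ofReal_integral_eq_lintegral_ofReal hint.integrableOn
      (ae_restrict_of_ae ((ae_nonneg_gammaMeasure α β).mono fun x hx => by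
        simp only [Pi.zero_apply]; linarith)),
    gammaMeasure, restrict_withDensity hS,
    lintegral_withDensity_eq_lintegral_mul _ hpdf (by fun_prop)]
  refine lintegral_congr fun t => ?_
  rw [Pi.mul_apply, gammaPDF, ENNReal.ofReal_mul' (gammaPDFReal_nonneg hα hβ t), mul_comm]

theorem integral_abs_truncE_sub_le_gammaMeasure {α β : ℝ} (hα : 0 < α) (hβ : 0 < β) :
    ∃ c : ℝ, ∀ a b : EReal,
      ∫ x, |truncE x a b - ∫ y, truncE y a b ∂gammaMeasure α β| ∂gammaMeasure α β
        ≤ c * ∫ x in {t : ℝ | a < t ∧ (t : EReal) < b}, (1 + x) ∂gammaMeasure α β := by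
  have := isProbabilityMeasure_gammaMeasure hα hβ
  obtain ⟨C, hC0, hC⟩ := exists_gammaMeasure_Iic_mul_Ioi_le hα hβ
  refine ⟨4 * C, fun a b => ?_⟩
  set S := {t : ℝ | a < t ∧ (t : EReal) < b}
  have hS : MeasurableSet S := measurable_coe_real_ereal measurableSet_Ioo
  have hI : 0 ≤ ∫ x in S, (1 + x) ∂gammaMeasure α β :=
    setIntegral_nonneg_of_ae ((ae_nonneg_gammaMeasure α β).mono fun x hx => by
      simp only [Pi.zero_apply]; linarith)
  rw [← ENNReal.ofReal_le_ofReal_iff (by positivity)]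
  calc _ ≤ 4 * ∫⁻ t in S, gammaMeasure α β (Iic t) * gammaMeasure α β (Ioi t) :=
        ofReal_integral_abs_sub_integral_le (integrable_id_gammaMeasure hα hβ) hS
          (ofReal_abs_truncE_sub_le a b)
    _ ≤ 4 * ∫⁻ t in S, ENNReal.ofReal C * ENNReal.ofReal ((1 + t) * gammaPDFReal α β t) :=
        by gcongr 4 * ?_; exact lintegral_mono fun t => (hC t).trans_eq (ENNReal.ofReal_mul hC0)
    _ = ENNReal.ofReal (4 * C * ∫ x in S, (1 + x) ∂gammaMeasure α β) := by
        rw [lintegral_const_mul' _ _ ENNReal.ofReal_ne_top,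
          ← ofReal_setIntegral_one_add_gammaMeasure hα hβ hS, ← ENNReal.ofReal_mul hC0,
          ← ENNReal.ofReal_ofNat 4, ← ENNReal.ofReal_mul (by norm_num), mul_assoc]

theorem gamma_truncation_L1_concentration_general
    (α β : ℝ) (hα : 0 < α) (hβ : 0 < β)
    {Ω : Type*} [MeasurableSpace Ω] (P : Measure Ω)
    (X : Ω → ℝ) (hX : Measurable X)
    (hdist : P.map X = gammaMeasure α β) :
    ∃ c : ℝ, ∀ a b : EReal, 0 ≤ a → a < b →
      ∫ ω, |truncE (X ω) a b - ∫ ω', truncE (X ω') a b ∂P| ∂P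
        ≤ c * ∫ ω, Set.indicator {ω' | a < (X ω' : EReal) ∧ (X ω' : EReal) < b}
            (fun ω' => 1 + X ω') ω ∂P := by
  obtain ⟨c, hc⟩ := integral_abs_truncE_sub_le_gammaMeasure hα hβ
  refine ⟨c, fun a b _ _ => ?_⟩
  set S := {t : ℝ | a < t ∧ (t : EReal) < b}
  have hS : MeasurableSet S := measurable_coe_real_ereal measurableSet_Ioo
  have hmap {f : ℝ → ℝ} (hf : Measurable f) : ∫ ω, f (X ω) ∂P = ∫ x, f x ∂gammaMeasure α β := by
    rw [← hdist, integral_map hX.aemeasurable hf.aestronglyMeasurable]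
  have hind (ω : Ω) : {ω' | a < (X ω' : EReal) ∧ (X ω' : EReal) < b}.indicator
      (fun ω' => 1 + X ω') ω = S.indicator (fun x => 1 + x) (X ω) :=
    indicator_comp_right (s := S) (g := fun x => 1 + x) X
  simp_rw [hind]
  rw [hmap (measurable_truncE a b), hmap ((measurable_truncE a b).sub_const _).abs,
    hmap (f := S.indicator fun x => 1 + x) ((measurable_const.add measurable_id).indicator hS),
    integral_indicator hS]
  exact hc a b

theorem gamma_truncation_L1_concentration
    (α β : ℝ) (hα : 0 < α) (hβ : 0 < β)
    {Ω : Type*} [MeasurableSpace Ω] (P : Measure Ω) [IsProbabilityMeasure P]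
    (X : Ω → ℝ) (hX : Measurable X)
    (hdist : P.map X = gammaMeasure α β) :
    ∃ c : ℝ, ∀ a b : EReal, 0 ≤ a → a < b →
      ∫ ω, |truncE (X ω) a b - ∫ ω', truncE (X ω') a b ∂P| ∂P
        ≤ c * ∫ ω, Set.indicator {ω' | a < (X ω' : EReal) ∧ (X ω' : EReal) < b}
            (fun ω' => 1 + X ω') ω ∂P :=
  gamma_truncation_L1_concentration_general α β hα hβ P X hX hdist
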